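/- Let n ≥ 1 and 0 < ε < 1. If positive reals λ_1,…,λ_n satisfy (n-1+ε)·Σ_{j=1}^n 1/λ_j² − 2·Σ_{j=1}^n 1/λ_j + 1 ≤ 0, then for every j one has λ_j ≤ (n-1+ε)/(1 − √(1−ε)). -/

import Mathlib

/-!
Put `μᵢ = 1 / λᵢ` and `a = n - 1 + ε`. Completing the square,
`a · (a ∑ μᵢ² - 2 ∑ μᵢ + 1) = ∑ (a μᵢ - 1)² - (1 - ε)`, so the hypothesis says that the point
`(a μᵢ)ᵢ` lies in the ball of radius `√(1 - ε)` around `(1, …, 1)`. In particular every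
coordinate satisfies `a / λⱼ ≥ 1 - √(1 - ε) > 0`.
-/

open Finset

theorem sum_sq_mul_sub_one {ι : Type*} [Fintype ι] (a : ℝ) (x : ι → ℝ) :
    ∑ i, (a * x i - 1) ^ 2 = a * (a * ∑ i, x i ^ 2 - 2 * ∑ i, x i) + Fintype.card ι := by
  simp only [sub_sq, sum_add_distrib, sum_sub_distrib, mul_pow, ← mul_sum, ← sum_mul, sum_const,
    card_univ, nsmul_eq_mul]
  ring

theorem sq_mul_sub_one_le_of_quadratic_nonpos {ι : Type*} [Fintype ι] {a : ℝ} (ha : 0 ≤ a)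
    (x : ι → ℝ) (h : a * ∑ i, x i ^ 2 - 2 * ∑ i, x i + 1 ≤ 0) (j : ι) :
    (a * x j - 1) ^ 2 ≤ Fintype.card ι - a :=
  calc (a * x j - 1) ^ 2
      ≤ ∑ i, (a * x i - 1) ^ 2 :=
        single_le_sum (f := fun i => (a * x i - 1) ^ 2) (fun _ _ => sq_nonneg _) (mem_univ j)
    _ ≤ Fintype.card ι - a := by
        rw [sum_sq_mul_sub_one]
        nlinarith [mul_nonpos_of_nonneg_of_nonpos ha h]

theorem le_div_one_sub_sqrt_of_sq_div_sub_one_le {a l ε : ℝ} (hl : 0 < l) (hε : 0 < ε)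
    (h : (a / l - 1) ^ 2 ≤ 1 - ε) : l ≤ a / (1 - √(1 - ε)) := by
  have hsqrt : √(1 - ε) < 1 := (Real.sqrt_lt' one_pos).mpr (by linarith)
  have hlow : 1 - √(1 - ε) ≤ a / l := by
    linarith [(abs_le.mp (Real.abs_le_sqrt h)).1]
  rw [le_div_iff₀ (by linarith)]
  rwa [le_div_iff₀ hl, mul_comm] at hlow

theorem eigenvalue_upper_bound_general (n : ℕ) (ε : ℝ) (hε0 : 0 < ε)
    (lam : Fin n → ℝ) (hpos : ∀ j, 0 < lam j)
    (h : (n - 1 + ε) * (∑ j, 1 / (lam j) ^ 2) - 2 * (∑ j, 1 / lam j) + 1 ≤ 0) :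
    ∀ j, lam j ≤ (n - 1 + ε) / (1 - Real.sqrt (1 - ε)) := by
  intro j
  have hn : (1 : ℝ) ≤ n := by exact_mod_cast j.pos
  have hj := sq_mul_sub_one_le_of_quadratic_nonpos (a := n - 1 + ε) (by linarith)
    (fun i => 1 / lam i) (by simpa only [div_pow, one_pow] using h) j
  rw [Fintype.card_fin, mul_one_div] at hj
  exact le_div_one_sub_sqrt_of_sq_div_sub_one_le (hpos j) hε0 (by linarith)

theorem eigenvalue_upper_bound (n : ℕ) (hn : 1 ≤ n) (ε : ℝ) (hε0 : 0 < ε) (hε1 : ε < 1)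
    (lam : Fin n → ℝ) (hpos : ∀ j, 0 < lam j)
    (h : (n - 1 + ε) * (∑ j, 1 / (lam j) ^ 2) - 2 * (∑ j, 1 / lam j) + 1 ≤ 0) :
    ∀ j, lam j ≤ (n - 1 + ε) / (1 - Real.sqrt (1 - ε)) :=
  eigenvalue_upper_bound_general n ε hε0 lam hpos h
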